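/- Let A₁ and A₂ be disjoint subsets of Ω, each a union of CKCs, and set A = A₁ ∪ A₂. Assume: (1) for each i ∈ {1, 2} and every F₂-measurable signaling strategy τ₂ on A_i there exists an F₁-measurable signaling strategy τ₁ on A_i with μ_{τ₁}|_{A_i} = μ_{τ₂}|_{A_i}; and (2) for all ω₁, ω₁' ∈ A₁ and ω₂, ω₂' ∈ A₂ such that F₁(ω₁) = F₁(ω₂) and F₁(ω₁') = F₁(ω₂'), one has F₁(ω₁) = F₁(ω₁'). Then for every F₂-measurable signaling strategy τ₂ on A there exists an F₁-measurable signaling strategy τ₁ on A such that μ_{τ₁}|_{A_i} = μ_{τ₂}|_{A_i} for every i ∈ {1, 2}. -/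
import Mathlib


open scoped Classical

namespace Oracles

variable {Ω : Type}

/-- Two states lie in the same common knowledge component (CKC) iff they are related
by the join (finest common coarsening) of the players' information partitions. -/
def ckcRel {n : ℕ} (Pl : Fin n → Setoid Ω) (ω ω' : Ω) : Prop :=
  (⨆ i, Pl i).r ω ω'

/-- An `F`-loop: a cyclic sequence of `m ≥ 2` pairs of states `(x j, y j)`. -/
structure IsLoop {n : ℕ} (Pl : Fin n → Setoid Ω) (F : Setoid Ω)
    (m : ℕ) (x y : ZMod m → Ω) : Prop where
  two_le : 2 ≤ m
  pair_ne : ∀ j, x j ≠ y j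
  pair_ckc : ∀ j, ckcRel Pl (x j) (y j)
  link : ∀ j, F.r (y j) (x (j + 1))
  ckc_ne : ∀ j, ¬ ckcRel Pl (x j) (x (j + 1))
  link_disjoint : ∀ j k : ZMod m, j ≠ k →
    ({y j, x (j + 1)} : Set Ω) ∩ {y k, x (k + 1)} = ∅

/-- The set of states of a loop. -/
def loopStates {m : ℕ} (x y : ZMod m → Ω) : Set Ω :=
  Set.range x ∪ Set.range y

/-- `F` refines `F'` in every CKC. -/
def RefinesInCKC {n : ℕ} (Pl : Fin n → Setoid Ω) (F F' : Setoid Ω) : Prop :=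
  ∀ ω ω', ckcRel Pl ω ω' → F.r ω ω' → F'.r ω ω'

/-- A loop is `F'`-non-informative if both states of each of its pairs lie in the
same block of `F'`. -/
def NonInformative (F' : Setoid Ω) {m : ℕ} (x y : ZMod m → Ω) : Prop :=
  ∀ j, F'.r (x j) (y j)

/-- A loop is `F'`-fully-informative if the states of each pair lie in different
blocks of `F'`. -/
def FullyInformative (F' : Setoid Ω) {m : ℕ} (x y : ZMod m → Ω) : Prop :=
  ∀ j, ¬ F'.r (x j) (y j)

/-- A loop is `F'`-informative if the states of at least one pair lie in different
blocks of `F'`. -/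
def Informative (F' : Setoid Ω) {m : ℕ} (x y : ZMod m → Ω) : Prop :=
  ∃ j, ¬ F'.r (x j) (y j)

/-- A loop is irreducible if no strict subset of its set of states forms an `F`-loop. -/
def IsIrreducible {n : ℕ} (Pl : Fin n → Setoid Ω) (F : Setoid Ω)
    {m : ℕ} (x y : ZMod m → Ω) : Prop :=
  ¬ ∃ (m' : ℕ) (x' y' : ZMod m' → Ω),
      IsLoop Pl F m' x' y' ∧ loopStates x' y' ⊂ loopStates x y

/-- A loop is type-2 irreducible if no four distinct states of the loop lie in the
same block of `F`. -/
def Type2Irreducible (F : Setoid Ω) {m : ℕ} (x y : ZMod m → Ω) : Prop :=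
  ¬ ∃ a b c d : Ω,
      a ∈ loopStates x y ∧ b ∈ loopStates x y ∧ c ∈ loopStates x y ∧
        d ∈ loopStates x y ∧
      a ≠ b ∧ a ≠ c ∧ a ≠ d ∧ b ≠ c ∧ b ≠ d ∧ c ≠ d ∧
      F.r a b ∧ F.r a c ∧ F.r a d

/-- A loop is `F'`-balanced if for every partition of its set of states into two
disjoint `F'`-measurable sets `A` and `B`, the number of transitions from `A` to `B`
equals the number of transitions from `B` to `A`. -/
def Balanced (F' : Setoid Ω) {m : ℕ} (x y : ZMod m → Ω) : Prop :=
  ∀ A B : Set Ω,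
    A ∪ B = loopStates x y → A ∩ B = ∅ →
    (∀ ω ω', ω ∈ loopStates x y → ω' ∈ loopStates x y → F'.r ω ω' →
      (ω ∈ A ↔ ω' ∈ A)) →
    Nat.card {j : ZMod m // x j ∈ A ∧ y j ∈ B} =
      Nat.card {j : ZMod m // x j ∈ B ∧ y j ∈ A}

/-- A loop is `F'`-covered if its index set can be partitioned into the set
`J = {j : x j ∈ F'(y j)}` together with classes each of which, arranged in a
suitable cyclic order, forms an `F'`-loop. -/
def Covered {n : ℕ} (Pl : Fin n → Setoid Ω) (F' : Setoid Ω)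
    {m : ℕ} (x y : ZMod m → Ω) : Prop :=
  ∃ (r : ℕ) (I : Fin r → Set (ZMod m)),
    (Pairwise fun t t' => Disjoint (I t) (I t')) ∧
    (⋃ t, I t) = {j | ¬ F'.r (x j) (y j)} ∧
    ∀ t, ∃ (mt : ℕ) (e : ZMod mt → ZMod m),
      Function.Injective e ∧ Set.range e = I t ∧
      IsLoop Pl F' mt (x ∘ e) (y ∘ e)


/-- A full-support common prior. -/
def IsPrior [Fintype Ω] (μ : Ω → ℝ) : Prop :=
  (∀ ω, 0 < μ ω) ∧ ∑ ω, μ ω = 1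

/-- An `F`-measurable signaling strategy: a finitely supported probability
distribution on the signals `ℕ` at every state, constant on blocks of `F`. -/
def IsStrategy (F : Setoid Ω) (τ : Ω → ℕ →₀ ℝ) : Prop :=
  (∀ ω s, 0 ≤ τ ω s) ∧
  (∀ ω, ((τ ω).sum fun _ p => p) = 1) ∧
  (∀ ω ω', F.r ω ω' → τ ω = τ ω')

/-- A mixed action. -/
def IsMixed {α : Type} [Fintype α] (β : α → ℝ) : Prop :=
  (∀ a, 0 ≤ β a) ∧ ∑ a, β a = 1

/-- Player `i`'s expected utility at information `(Π_i(ω), s)` when playing the mixed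
action `β` against the profile `σ` (unnormalized; normalization does not affect
the comparison of expected utilities). -/
noncomputable def condEU [Fintype Ω] {n : ℕ} {A : Fin n → Type} [∀ i, Fintype (A i)]
    (μ : Ω → ℝ) (Pl : Fin n → Setoid Ω) (u : Fin n → Ω → (∀ j, A j) → ℝ)
    (τ : Ω → ℕ →₀ ℝ) (σ : ∀ i, Ω → ℕ → A i → ℝ)
    (i : Fin n) (β : A i → ℝ) (ω : Ω) (s : ℕ) : ℝ :=
  ∑ ω' ∈ Finset.univ.filter (fun ω' => (Pl i).r ω ω'),
    μ ω' * τ ω' s *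
      ∑ a : ∀ j, A j,
        (β (a i) * ∏ j ∈ Finset.univ.erase i, σ j ω' s (a j)) * u i ω' a

/-- A (Bayesian) Nash equilibrium of the incomplete-information game `G(τ)`. -/
def IsNash [Fintype Ω] {n : ℕ} {A : Fin n → Type} [∀ i, Fintype (A i)]
    (μ : Ω → ℝ) (Pl : Fin n → Setoid Ω) (u : Fin n → Ω → (∀ j, A j) → ℝ)
    (τ : Ω → ℕ →₀ ℝ) (σ : ∀ i, Ω → ℕ → A i → ℝ) : Prop :=
  (∀ i ω s, IsMixed (σ i ω s)) ∧
  (∀ i ω ω', (Pl i).r ω ω' → σ i ω = σ i ω') ∧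
  ∀ i ω s,
    (0 < ∑ ω' ∈ Finset.univ.filter (fun ω' => (Pl i).r ω ω'), μ ω' * τ ω' s) →
    ∀ β : A i → ℝ, IsMixed β →
      condEU μ Pl u τ σ i β ω s ≤ condEU μ Pl u τ σ i (σ i ω s) ω s

/-- The distribution on `Ω × A` induced by an equilibrium profile. -/
noncomputable def inducedDist [Fintype Ω] {n : ℕ} {A : Fin n → Type}
    (μ : Ω → ℝ) (τ : Ω → ℕ →₀ ℝ) (σ : ∀ i, Ω → ℕ → A i → ℝ) :
    Ω × (∀ i, A i) → ℝ :=
  fun p => μ p.1 * (τ p.1).sum fun s q => q * ∏ i, σ i p.1 s (p.2 i)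

/-- The set of Nash-equilibrium distributions of `G(τ)`. -/
def NED [Fintype Ω] {n : ℕ} {A : Fin n → Type} [∀ i, Fintype (A i)]
    (μ : Ω → ℝ) (Pl : Fin n → Setoid Ω) (u : Fin n → Ω → (∀ j, A j) → ℝ)
    (τ : Ω → ℕ →₀ ℝ) : Set (Ω × (∀ i, A i) → ℝ) :=
  {P | ∃ σ : ∀ i, Ω → ℕ → A i → ℝ, IsNash μ Pl u τ σ ∧ P = inducedDist μ τ σ}

/-- Oracle `1` (with partition `F₁`) dominates Oracle `2` (with partition `F₂`):
for every game and every `F₂`-measurable signaling strategy there is an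
`F₁`-measurable signaling strategy inducing the same set of Nash-equilibrium
distributions. -/
def Dominates [Fintype Ω] {n : ℕ} (μ : Ω → ℝ) (Pl : Fin n → Setoid Ω)
    (F₁ F₂ : Setoid Ω) : Prop :=
  ∀ (A : Fin n → Type) (instA : ∀ i, Fintype (A i)),
    (∀ i, Nonempty (A i)) →
    ∀ (u : Fin n → Ω → (∀ j, A j) → ℝ) (τ₂ : Ω → ℕ →₀ ℝ),
      IsStrategy F₂ τ₂ →
      ∃ τ₁ : Ω → ℕ →₀ ℝ, IsStrategy F₁ τ₁ ∧
        @NED Ω _ n A instA μ Pl u τ₁ = @NED Ω _ n A instA μ Pl u τ₂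

/-- `A` is a union of CKCs. -/
def UnionOfCKCs {n : ℕ} (Pl : Fin n → Setoid Ω) (A : Set Ω) : Prop :=
  ∀ ω ∈ A, ∀ ω', ckcRel Pl ω ω' → ω' ∈ A

/-- An `F`-measurable signaling strategy on a subset `A` of the state space. -/
def IsStrategyOn (F : Setoid Ω) (A : Set Ω) (τ : Ω → ℕ →₀ ℝ) : Prop :=
  (∀ ω ∈ A, ∀ s, 0 ≤ τ ω s) ∧
  (∀ ω ∈ A, ((τ ω).sum fun _ p => p) = 1) ∧
  ∀ ω ∈ A, ∀ ω' ∈ A, F.r ω ω' → τ ω = τ ω'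

/-- Player `i`'s posterior belief after observing `Π_i(ω)` and the signal `s`. -/
noncomputable def posterior [Fintype Ω] {n : ℕ} (μ : Ω → ℝ) (Pl : Fin n → Setoid Ω)
    (τ : Ω → ℕ →₀ ℝ) (i : Fin n) (ω : Ω) (s : ℕ) : Ω → ℝ :=
  fun ω' =>
    if (Pl i).r ω ω' then
      μ ω' * τ ω' s /
        ∑ ω'' ∈ Finset.univ.filter (fun ω'' => (Pl i).r ω ω''), μ ω'' * τ ω'' s
    else 0

/-- The distribution over posterior-belief profiles generated by `τ` on the
states of `B`: the mass assigned to the profile `p`. -/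
noncomputable def postDist [Fintype Ω] {n : ℕ} (μ : Ω → ℝ) (Pl : Fin n → Setoid Ω)
    (τ : Ω → ℕ →₀ ℝ) (B : Set Ω) : (Fin n → Ω → ℝ) → ℝ :=
  fun p =>
    ∑ ω ∈ Finset.univ.filter (fun ω => ω ∈ B),
      (τ ω).sum fun s q =>
        if ∀ i, posterior μ Pl τ i ω s = p i then μ ω * q else 0

noncomputable def prodSig (f g : ℕ →₀ ℝ) : ℕ →₀ ℝ where
  support := (f.support ×ˢ g.support).image fun p => Nat.pair p.1 p.2
  toFun n := f (Nat.unpair n).1 * g (Nat.unpair n).2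
  mem_support_toFun n := by
    simp only [Finset.mem_image, Finset.mem_product, Finsupp.mem_support_iff]
    constructor
    · rintro ⟨⟨a, b⟩, ⟨ha, hb⟩, rfl⟩
      simp [Nat.unpair_pair, mul_ne_zero ha hb]
    · intro h
      exact ⟨Nat.unpair n, ⟨left_ne_zero_of_mul h, right_ne_zero_of_mul h⟩,
        Nat.pair_unpair n⟩
lemma prodSig_pair (f g : ℕ →₀ ℝ) (a b : ℕ) :
    prodSig f g (Nat.pair a b) = f a * g b := by
  show f (Nat.unpair _).1 * g (Nat.unpair _).2 = _
  simp [Nat.unpair_pair]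

lemma mem_of_rel {n : ℕ} {Pl : Fin n → Setoid Ω} {B : Set Ω} (hB : UnionOfCKCs Pl B)
    {i : Fin n} {ω ω' : Ω} (hω : ω ∈ B) (h : (Pl i).r ω ω') : ω' ∈ B :=
  hB ω hω ω' (Setoid.le_def.mp (le_iSup Pl i) h)

lemma posterior_prodSig_right [Fintype Ω] {n : ℕ} (μ : Ω → ℝ) (Pl : Fin n → Setoid Ω)
    (τ τ' : Ω → ℕ →₀ ℝ) (B : Set Ω) (hB : UnionOfCKCs Pl B) (q₀ : ℕ →₀ ℝ)
    (hτ' : ∀ ω ∈ B, τ' ω = prodSig (τ ω) q₀)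
    {t : ℕ} (ht : q₀ t ≠ 0) (i : Fin n) {ω : Ω} (hω : ω ∈ B) (s : ℕ) :
    posterior μ Pl τ' i ω (Nat.pair s t) = posterior μ Pl τ i ω s := by
  have hden : ∀ ω'' ∈ Finset.univ.filter (fun ω'' => (Pl i).r ω ω''),
      μ ω'' * τ' ω'' (Nat.pair s t) = μ ω'' * τ ω'' s * q₀ t := by
    intro ω'' h''
    rw [hτ' ω'' (mem_of_rel hB hω (Finset.mem_filter.mp h'').2), prodSig_pair, mul_assoc]
  funext ω'
  unfold posterior
  by_cases hr : (Pl i).r ω ω'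
  · simp only [hr, if_true]
    rw [Finset.sum_congr rfl hden, ← Finset.sum_mul,
      hτ' ω' (mem_of_rel hB hω hr), prodSig_pair, ← mul_assoc,
      mul_div_mul_right _ _ ht]
  · simp [hr]

lemma posterior_prodSig_left [Fintype Ω] {n : ℕ} (μ : Ω → ℝ) (Pl : Fin n → Setoid Ω)
    (τ τ' : Ω → ℕ →₀ ℝ) (B : Set Ω) (hB : UnionOfCKCs Pl B) (p₀ : ℕ →₀ ℝ)
    (hτ' : ∀ ω ∈ B, τ' ω = prodSig p₀ (τ ω))
    {s : ℕ} (hs : p₀ s ≠ 0) (i : Fin n) {ω : Ω} (hω : ω ∈ B) (t : ℕ) :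
    posterior μ Pl τ' i ω (Nat.pair s t) = posterior μ Pl τ i ω t := by
  have hden : ∀ ω'' ∈ Finset.univ.filter (fun ω'' => (Pl i).r ω ω''),
      μ ω'' * τ' ω'' (Nat.pair s t) = p₀ s * (μ ω'' * τ ω'' t) := by
    intro ω'' h''
    rw [hτ' ω'' (mem_of_rel hB hω (Finset.mem_filter.mp h'').2), prodSig_pair]
    ring
  funext ω'
  unfold posterior
  by_cases hr : (Pl i).r ω ω'
  · simp only [hr, if_true]
    rw [Finset.sum_congr rfl hden, ← Finset.mul_sum,
      hτ' ω' (mem_of_rel hB hω hr), prodSig_pair,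
      show μ ω' * (p₀ s * τ ω' t) = p₀ s * (μ ω' * τ ω' t) by ring,
      mul_div_mul_left _ _ hs]
  · simp [hr]
lemma prodSig_sum {M : Type*} [AddCommMonoid M] (f g : ℕ →₀ ℝ) (h : ℕ → ℝ → M) :
    (prodSig f g).sum h
      = ∑ p ∈ f.support ×ˢ g.support, h (Nat.pair p.1 p.2) (f p.1 * g p.2) := by
  rw [Finsupp.sum]
  rw [show (prodSig f g).support
      = (f.support ×ˢ g.support).image (fun p => Nat.pair p.1 p.2) from rfl]
  rw [Finset.sum_image (fun p _ q _ hpq => (by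
    have := congrArg Nat.unpair hpq
    simpa [Nat.unpair_pair, Prod.ext_iff] using this : p = q))]
  exact Finset.sum_congr rfl fun p _ => by rw [prodSig_pair]

lemma postDist_prodSig_right [Fintype Ω] {n : ℕ} (μ : Ω → ℝ) (Pl : Fin n → Setoid Ω)
    (τ τ' : Ω → ℕ →₀ ℝ) (B : Set Ω) (hB : UnionOfCKCs Pl B) (q₀ : ℕ →₀ ℝ)
    (hq : (q₀.sum fun _ p => p) = 1)
    (hτ' : ∀ ω ∈ B, τ' ω = prodSig (τ ω) q₀) :
    postDist μ Pl τ' B = postDist μ Pl τ B := by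
  funext p
  unfold postDist
  refine Finset.sum_congr rfl fun ω hω => ?_
  have hωB : ω ∈ B := (Finset.mem_filter.mp hω).2
  rw [hτ' ω hωB, prodSig_sum, Finset.sum_product]
  refine Finset.sum_congr rfl fun s _ => ?_
  have step : ∀ t ∈ q₀.support,
      (if ∀ i, posterior μ Pl τ' i ω (Nat.pair s t) = p i
        then μ ω * (τ ω s * q₀ t) else 0)
      = (if ∀ i, posterior μ Pl τ i ω s = p i then μ ω * τ ω s else 0) * q₀ t := by
    intro t htm
    have ht : q₀ t ≠ 0 := Finsupp.mem_support_iff.mp htm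
    have hc : (∀ i, posterior μ Pl τ' i ω (Nat.pair s t) = p i)
        ↔ (∀ i, posterior μ Pl τ i ω s = p i) :=
      forall_congr' fun i => by
        rw [posterior_prodSig_right μ Pl τ τ' B hB q₀ hτ' ht i hωB s]
    rw [if_congr hc rfl rfl]
    by_cases hC : ∀ i, posterior μ Pl τ i ω s = p i
    · simp [hC, mul_assoc]
    · simp [hC]
  rw [Finset.sum_congr rfl step, ← Finset.mul_sum]
  rw [show ∑ t ∈ q₀.support, q₀ t = 1 from hq, mul_one]

lemma postDist_prodSig_left [Fintype Ω] {n : ℕ} (μ : Ω → ℝ) (Pl : Fin n → Setoid Ω)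
    (τ τ' : Ω → ℕ →₀ ℝ) (B : Set Ω) (hB : UnionOfCKCs Pl B) (p₀ : ℕ →₀ ℝ)
    (hp : (p₀.sum fun _ p => p) = 1)
    (hτ' : ∀ ω ∈ B, τ' ω = prodSig p₀ (τ ω)) :
    postDist μ Pl τ' B = postDist μ Pl τ B := by
  funext p
  unfold postDist
  refine Finset.sum_congr rfl fun ω hω => ?_
  have hωB : ω ∈ B := (Finset.mem_filter.mp hω).2
  rw [hτ' ω hωB, prodSig_sum, Finset.sum_product]
  have step : ∀ s ∈ p₀.support,
      (∑ t ∈ (τ ω).support,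
        if ∀ i, posterior μ Pl τ' i ω (Nat.pair s t) = p i
          then μ ω * (p₀ s * τ ω t) else 0)
      = p₀ s * ((τ ω).sum fun t q =>
          if ∀ i, posterior μ Pl τ i ω t = p i then μ ω * q else 0) := by
    intro s hsm
    have hs : p₀ s ≠ 0 := Finsupp.mem_support_iff.mp hsm
    rw [Finsupp.sum, Finset.mul_sum]
    refine Finset.sum_congr rfl fun t _ => ?_
    have hc : (∀ i, posterior μ Pl τ' i ω (Nat.pair s t) = p i)
        ↔ (∀ i, posterior μ Pl τ i ω t = p i) :=
      forall_congr' fun i => by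
        rw [posterior_prodSig_left μ Pl τ τ' B hB p₀ hτ' hs i hωB t]
    rw [if_congr hc rfl rfl]
    by_cases hC : ∀ i, posterior μ Pl τ i ω t = p i
    · simp [hC]; ring
    · simp [hC]
  rw [Finset.sum_congr rfl step, ← Finset.sum_mul]
  rw [show ∑ s ∈ p₀.support, p₀ s = 1 from hp, one_mul]
lemma prodSig_total (f g : ℕ →₀ ℝ) :
    ((prodSig f g).sum fun _ p => p)
      = (f.sum fun _ p => p) * (g.sum fun _ p => p) := by
  rw [prodSig_sum, Finsupp.sum, Finsupp.sum, Finset.sum_mul_sum]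
  rw [Finset.sum_product]

/-- **Lemma (combining strategies across unconnected components).**
Let `A₁` and `A₂` be disjoint unions of CKCs and `A = A₁ ∪ A₂`. If (1) on each
`A_i`, every `F₂`-measurable signaling strategy can be matched by an
`F₁`-measurable one with the same distribution over posterior profiles, and
(2) any two blocks of `F₁` meeting both `A₁` and `A₂` coincide, then every
`F₂`-measurable signaling strategy on `A` can be matched by an `F₁`-measurable
signaling strategy on `A` with the same distribution over posterior profiles on
each `A_i`. -/
theorem combine_strategies_across_components
    {Ω : Type} [Fintype Ω] [Nonempty Ω] {n : ℕ} (hn : 2 ≤ n)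
    (Pl : Fin n → Setoid Ω) (μ : Ω → ℝ) (hμ : IsPrior μ)
    (F₁ F₂ : Setoid Ω) (A₁ A₂ : Set Ω)
    (hdisj : Disjoint A₁ A₂)
    (hA₁ : UnionOfCKCs Pl A₁) (hA₂ : UnionOfCKCs Pl A₂)
    (h1 : ∀ τ₂ : Ω → ℕ →₀ ℝ, IsStrategyOn F₂ A₁ τ₂ →
      ∃ τ₁ : Ω → ℕ →₀ ℝ, IsStrategyOn F₁ A₁ τ₁ ∧
        postDist μ Pl τ₁ A₁ = postDist μ Pl τ₂ A₁)
    (h2 : ∀ τ₂ : Ω → ℕ →₀ ℝ, IsStrategyOn F₂ A₂ τ₂ →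
      ∃ τ₁ : Ω → ℕ →₀ ℝ, IsStrategyOn F₁ A₂ τ₁ ∧
        postDist μ Pl τ₁ A₂ = postDist μ Pl τ₂ A₂)
    (hconn : ∀ ω₁ ∈ A₁, ∀ ω₁' ∈ A₁, ∀ ω₂ ∈ A₂, ∀ ω₂' ∈ A₂,
      F₁.r ω₁ ω₂ → F₁.r ω₁' ω₂' → F₁.r ω₁ ω₁') :
    ∀ τ₂ : Ω → ℕ →₀ ℝ, IsStrategyOn F₂ (A₁ ∪ A₂) τ₂ →
      ∃ τ₁ : Ω → ℕ →₀ ℝ, IsStrategyOn F₁ (A₁ ∪ A₂) τ₁ ∧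
        postDist μ Pl τ₁ A₁ = postDist μ Pl τ₂ A₁ ∧
        postDist μ Pl τ₁ A₂ = postDist μ Pl τ₂ A₂ := by
  intro τ₂ hτ₂
  obtain ⟨σ₁, hσ₁, he₁⟩ := h1 τ₂
    ⟨fun ω h => hτ₂.1 ω (Or.inl h), fun ω h => hτ₂.2.1 ω (Or.inl h),
     fun ω h ω' h' => hτ₂.2.2 ω (Or.inl h) ω' (Or.inl h')⟩
  obtain ⟨σ₂, hσ₂, he₂⟩ := h2 τ₂
    ⟨fun ω h => hτ₂.1 ω (Or.inr h), fun ω h => hτ₂.2.1 ω (Or.inr h),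
     fun ω h ω' h' => hτ₂.2.2 ω (Or.inr h) ω' (Or.inr h')⟩
  obtain ⟨P, Q, hPs, hQs, hPn, hQn, hkey⟩ : ∃ P Q : ℕ →₀ ℝ,
      (P.sum fun _ p => p) = 1 ∧ (Q.sum fun _ p => p) = 1 ∧
      (∀ s, 0 ≤ P s) ∧ (∀ s, 0 ≤ Q s) ∧
      (∀ ω ∈ A₁, ∀ ω' ∈ A₂, F₁.r ω ω' → σ₁ ω = P ∧ σ₂ ω' = Q) := by
    by_cases hstr : ∃ a ∈ A₁, ∃ b ∈ A₂, F₁.r a b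
    · obtain ⟨a, ha, b, hb, hab⟩ := hstr
      refine ⟨σ₁ a, σ₂ b, hσ₁.2.1 a ha, hσ₂.2.1 b hb, hσ₁.1 a ha, hσ₂.1 b hb, ?_⟩
      intro ω hω ω' hω' hr
      have h1' : F₁.r ω a := hconn ω hω a ha ω' hω' b hb hr hab
      have h2' : F₁.r ω' b :=
        F₁.iseqv.trans (F₁.iseqv.symm hr) (F₁.iseqv.trans h1' hab)
      exact ⟨hσ₁.2.2 ω hω a ha h1', hσ₂.2.2 ω' hω' b hb h2'⟩
    · refine ⟨Finsupp.single 0 1, Finsupp.single 0 1, ?_, ?_, ?_, ?_,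
        fun ω hω ω' hω' hr => absurd ⟨ω, hω, ω', hω', hr⟩ hstr⟩
      · simp [Finsupp.sum_single_index]
      · simp [Finsupp.sum_single_index]
      · intro s; classical
        rw [Finsupp.single_apply]; split <;> norm_num
      · intro s; classical
        rw [Finsupp.single_apply]; split <;> norm_num
  classical
  set τ₁ : Ω → ℕ →₀ ℝ := fun ω => if ω ∈ A₂ then prodSig P (σ₂ ω) else prodSig (σ₁ ω) Q
    with hτdef
  have hτA₁ : ∀ ω ∈ A₁, τ₁ ω = prodSig (σ₁ ω) Q :=
    fun ω h => if_neg (Set.disjoint_left.mp hdisj h)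
  have hτA₂ : ∀ ω ∈ A₂, τ₁ ω = prodSig P (σ₂ ω) := fun ω h => if_pos h
  refine ⟨τ₁, ⟨?_, ?_, ?_⟩, ?_, ?_⟩
  · intro ω hω s
    rcases hω with h | h
    · rw [hτA₁ ω h]; exact mul_nonneg (hσ₁.1 ω h _) (hQn _)
    · rw [hτA₂ ω h]; exact mul_nonneg (hPn _) (hσ₂.1 ω h _)
  · intro ω hω
    rcases hω with h | h
    · rw [hτA₁ ω h, prodSig_total, hσ₁.2.1 ω h, hQs, mul_one]
    · rw [hτA₂ ω h, prodSig_total, hσ₂.2.1 ω h, hPs, one_mul]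
  · intro ω hω ω' hω' hr
    rcases hω with h | h <;> rcases hω' with h' | h'
    · rw [hτA₁ ω h, hτA₁ ω' h', hσ₁.2.2 ω h ω' h' hr]
    · obtain ⟨e1, e2⟩ := hkey ω h ω' h' hr
      rw [hτA₁ ω h, hτA₂ ω' h', e1, e2]
    · obtain ⟨e1, e2⟩ := hkey ω' h' ω h (F₁.iseqv.symm hr)
      rw [hτA₂ ω h, hτA₁ ω' h', e1, e2]
    · rw [hτA₂ ω h, hτA₂ ω' h', hσ₂.2.2 ω h ω' h' hr]
  · rw [postDist_prodSig_right μ Pl σ₁ τ₁ A₁ hA₁ Q hQs hτA₁, he₁]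
  · rw [postDist_prodSig_left μ Pl σ₂ τ₁ A₂ hA₂ P hPs hτA₂, he₂]


end Oracles
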